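/- Let D ≥ 1 and consider outputs of a depth-D geometrically restricted circuit on the cycle C_{6D}, where each output y_j depends only on inputs x_{j-D}, …, x_{j+D} (indices mod 6D), and suppose the only possibly nonzero inputs are x_0, x_{2D}, x_{4D}. Then there do not exist a function e: F2^3 → F2 of the form e(u,v,w) = α + β_0 u + β_2 v + β_4 w and three functions f_1(u,v) = α_1 + β_1 u + γ_1 v + δ_1 uv, f_2(v,w) = α_2 + β_2' v + γ_2 w + δ_2 vw, f_3(u,w) = α_3 + β_3' u + γ_3 w + δ_3 uw over F2 satisfying e(0,0,0)=0, e(1,1,0)+f_1(1,1)=1, e(0,1,1)+f_2(1,1)=1, e(1,0,1)+f_3(1,1)=1, and f_1(1,1)+f_2(1,1)+f_3(1,1)=0. -/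
import Mathlib

/-- Algebraic core of Theorem 1: for any depth `D ≥ 1`, there do not exist an affine
function `e : F₂³ → F₂` and multilinear two-variable functions `f₁, f₂, f₃` over `F₂`
satisfying the five win-condition constraints of the stabilizer submeasurement game
`SS(C_{6D}, I⁽⁵⁾_{HLF,6D})`. -/
theorem no_depth_D_perfect_strategy (D : ℕ) (hD : 1 ≤ D) :
    ¬ ∃ (e : ZMod 2 → ZMod 2 → ZMod 2 → ZMod 2)
        (f₁ f₂ f₃ : ZMod 2 → ZMod 2 → ZMod 2),
      (∃ α β₀ β₂ β₄ : ZMod 2, ∀ u v w, e u v w = α + β₀ * u + β₂ * v + β₄ * w) ∧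
      (∃ α₁ β₁ γ₁ δ₁ : ZMod 2, ∀ u v, f₁ u v = α₁ + β₁ * u + γ₁ * v + δ₁ * u * v) ∧
      (∃ α₂ β₂' γ₂ δ₂ : ZMod 2, ∀ v w, f₂ v w = α₂ + β₂' * v + γ₂ * w + δ₂ * v * w) ∧
      (∃ α₃ β₃' γ₃ δ₃ : ZMod 2, ∀ u w, f₃ u w = α₃ + β₃' * u + γ₃ * w + δ₃ * u * w) ∧
      e 0 0 0 = 0 ∧
      e 1 1 0 + f₁ 1 1 = 1 ∧
      e 0 1 1 + f₂ 1 1 = 1 ∧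
      e 1 0 1 + f₃ 1 1 = 1 ∧
      f₁ 1 1 + f₂ 1 1 + f₃ 1 1 = 0 := by
  rintro ⟨e, f₁, f₂, f₃, ⟨α, β₀, β₂, β₄, he⟩, -, -, -, h0, h1, h2, h3, hsum⟩
  have key : (e 1 1 0 + f₁ 1 1) + (e 0 1 1 + f₂ 1 1) + (e 1 0 1 + f₃ 1 1) = 1 := by
    rw [h1, h2, h3]; decide
  rw [he, he, he] at key
  rw [he] at h0
  have : α = 0 := by simpa using h0
  subst this
  have h2' : (2 : ZMod 2) = 0 := by decide
  ring_nf at key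
  -- key should now be a contradiction; analyze
  revert key hsum
  generalize f₁ 1 1 = a
  generalize f₂ 1 1 = b
  generalize f₃ 1 1 = c
  clear he h1 h2 h3 e f₁ f₂ f₃
  revert β₀ β₂ β₄ a b c
  decide
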